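/- (Up-to-bad approximate coupling.) Let μ₁, μ₂ be sub-distributions over A₁, A₂, P₁ ⊆ A₁ with μ₁(A₁∖P₁) ≤ δ', and R ⊆ A₁ × A₂. If there is an (ε,δ)-approximate lifting of {(a₁,a₂) : a₁ ∈ P₁ → (a₁,a₂) ∈ R} relating μ₁ and μ₂, then there is an (ε, δ+δ')-approximate lifting of R relating μ₁ and μ₂. Symmetrically, if P₂ ⊆ A₂ with μ₂(A₂∖P₂) ≤ δ' and there is an (ε,δ)-approximate lifting of {(a₁,a₂) : a₂ ∈ P₂ → (a₁,a₂) ∈ R}, then there is an (ε, δ + e^ε·δ')-approximate lifting of R. -/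

import Mathlib

open scoped ENNReal

noncomputable section

/-- A discrete sub-distribution: total mass at most 1. -/
def IsSubDist {A : Type*} (μ : A → ℝ≥0∞) : Prop := ∑' a, μ a ≤ 1

/-- Mass of a set under `μ`. -/
def setSum {A : Type*} (μ : A → ℝ≥0∞) (S : Set A) : ℝ≥0∞ := ∑' a : S, μ (a : A)

/-- `μ` is a coupling of `(μ₁, μ₂)`: a joint sub-distribution with the given marginals. -/
def IsCoupling {A₁ A₂ : Type*} (μ : A₁ × A₂ → ℝ≥0∞)
    (μ₁ : A₁ → ℝ≥0∞) (μ₂ : A₂ → ℝ≥0∞) : Prop :=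
  IsSubDist μ ∧ (∀ a₁, ∑' a₂, μ (a₁, a₂) = μ₁ a₁) ∧ (∀ a₂, ∑' a₁, μ (a₁, a₂) = μ₂ a₂)

/-- Image of a set under a relation. -/
def relImage {A₁ A₂ : Type*} (R : Set (A₁ × A₂)) (S : Set A₁) : Set A₂ :=
  {a₂ | ∃ a₁ ∈ S, (a₁, a₂) ∈ R}

/-- `R⋆ = R ∪ (A₁ × {⋆}) ∪ ({⋆} × A₂)`, with `⋆` modelled by `none`. -/
def starRel {A₁ A₂ : Type*} (R : Set (A₁ × A₂)) : Set (Option A₁ × Option A₂) :=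
  {p | match p with
       | (some a₁, some a₂) => (a₁, a₂) ∈ R
       | (some _, none) => True
       | (none, some _) => True
       | (none, none) => False}

/-- `(ε, δ)`-approximate `R`-lifting of `(μ₁, μ₂)`, witnessed by two
sub-distributions over `A₁⋆ × A₂⋆` with marginal, support, and ε-distance conditions. -/
def ApproxLift {A₁ A₂ : Type*} (ε δ : ℝ) (R : Set (A₁ × A₂))
    (μ₁ : A₁ → ℝ≥0∞) (μ₂ : A₂ → ℝ≥0∞) : Prop :=
  ∃ μL μR : Option A₁ × Option A₂ → ℝ≥0∞,
    IsSubDist μL ∧ IsSubDist μR ∧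
    (∀ a₁, ∑' o, μL (some a₁, o) = μ₁ a₁) ∧ (∀ o, μL (none, o) = 0) ∧
    (∀ a₂, ∑' o, μR (o, some a₂) = μ₂ a₂) ∧ (∀ o, μR (o, none) = 0) ∧
    {p | μL p ≠ 0} ⊆ starRel R ∧ {p | μR p ≠ 0} ⊆ starRel R ∧
    ∀ S : Set (Option A₁ × Option A₂),
      setSum μL S ≤ ENNReal.ofReal (Real.exp ε) * setSum μR S + ENNReal.ofReal δ

/-!
Take a witness `(μL, μR)` of the weaker lifting. Pairs `(a₁, a₂) ∉ R` may carry mass in it; the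
left witness moves such mass to `(a₁, ⋆)` and the right one to `(⋆, a₂)`. This keeps both
marginals and puts both supports in `R⋆`. The two repair maps agree outside the bad pairs, so an
event's probabilities change by at most the mass of the bad pairs. In the first case that mass is
bounded under `μL` by `μ₁(A₁ ∖ P₁)`, since a bad pair in the support of `μL` has `a₁ ∉ P₁`. In the
second case it is bounded under `μR` by `μ₂(A₂ ∖ P₂)`, and that bound gets multiplied by `e^ε`.
-/

open Set

section SetSum

variable {α β : Type*} (μ : α → ℝ≥0∞)

lemma setSum_univ : setSum μ univ = ∑' a, μ a := tsum_univ μ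

lemma setSum_mono {S T : Set α} (h : S ⊆ T) : setSum μ S ≤ setSum μ T :=
  ENNReal.tsum_mono_subtype μ h

lemma setSum_union_le (S T : Set α) : setSum μ (S ∪ T) ≤ setSum μ S + setSum μ T :=
  ENNReal.tsum_union_le μ S T

lemma setSum_eq_zero_iff {S : Set α} : setSum μ S = 0 ↔ ∀ a ∈ S, μ a = 0 := by
  simp [setSum, ENNReal.tsum_eq_zero]

lemma setSum_le_setSum_union_setSum {S T U : Set α} (h : S ⊆ T ∪ U) :
    setSum μ S ≤ setSum μ T + setSum μ U :=
  (setSum_mono μ h).trans (setSum_union_le μ T U)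

lemma setSum_mono_of_support {S T : Set α} (h : ∀ a ∈ S, μ a ≠ 0 → a ∈ T) :
    setSum μ S ≤ setSum μ T := by
  have hS : S ⊆ T ∪ {a | μ a = 0} := fun a ha => by
    by_cases h0 : μ a = 0
    exacts [Or.inr h0, Or.inl (h a ha h0)]
  have hnull : setSum μ {a | μ a = 0} = 0 := (setSum_eq_zero_iff μ).2 fun _ h => h
  simpa [hnull] using setSum_le_setSum_union_setSum μ hS

lemma setSum_biUnion {ι : Type*} {I : Set ι} {t : ι → Set α} (h : I.PairwiseDisjoint t) :
    setSum μ (⋃ i ∈ I, t i) = ∑' i : I, setSum μ (t i) :=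
  ENNReal.tsum_biUnion' h

lemma setSum_image {f : β → α} (hf : Function.Injective f) (S : Set β) :
    setSum μ (f '' S) = setSum (μ ∘ f) S :=
  tsum_image μ hf.injOn

end SetSum

def push {α β : Type*} (f : α → β) (μ : α → ℝ≥0∞) (b : β) : ℝ≥0∞ := setSum μ (f ⁻¹' {b})

section Push

variable {α β γ : Type*} (f : α → β) (μ : α → ℝ≥0∞)

lemma setSum_push (S : Set β) : setSum (push f μ) S = setSum μ (f ⁻¹' S) := by
  rw [← biUnion_preimage_singleton, setSum_biUnion μ (pairwiseDisjoint_fiber f S)]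
  rfl

lemma tsum_push : ∑' b, push f μ b = ∑' a, μ a := by
  rw [← setSum_univ, setSum_push, preimage_univ, setSum_univ]

lemma push_push (g : β → γ) : push g (push f μ) = push (g ∘ f) μ :=
  funext fun _ => setSum_push f μ _

lemma push_eq_zero_iff {b : β} : push f μ b = 0 ↔ ∀ a, f a = b → μ a = 0 := by
  simp [push, setSum_eq_zero_iff]

lemma push_fst (ν : β × γ → ℝ≥0∞) (b : β) : push Prod.fst ν b = ∑' c, ν (b, c) := by
  rw [push, preimage_fst_singleton_eq_range]
  exact tsum_range ν (Prod.mk_right_injective b)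

lemma push_snd (ν : β × γ → ℝ≥0∞) (c : γ) : push Prod.snd ν c = ∑' b, ν (b, c) := by
  rw [push, preimage_snd_singleton_eq_range]
  exact tsum_range ν (Prod.mk_left_injective c)

end Push

lemma tsum_push_fst {β γ : Type*} {f : β × γ → β × γ} (hf : Prod.fst ∘ f = Prod.fst)
    (ν : β × γ → ℝ≥0∞) (b : β) : ∑' c, push f ν (b, c) = ∑' c, ν (b, c) := by
  rw [← push_fst, ← push_fst, push_push, hf]

lemma tsum_push_snd {β γ : Type*} {f : β × γ → β × γ} (hf : Prod.snd ∘ f = Prod.snd)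
    (ν : β × γ → ℝ≥0∞) (c : γ) : ∑' b, push f ν (b, c) = ∑' b, ν (b, c) := by
  rw [← push_snd, ← push_snd, push_push, hf]

lemma support_push_subset {α β : Type*} (f : α → β) (μ : α → ℝ≥0∞) :
    {b | push f μ b ≠ 0} ⊆ f '' {a | μ a ≠ 0} := by
  intro b hb
  by_contra h
  exact hb ((push_eq_zero_iff f μ).2 fun a hab => by_contra fun ha => h ⟨a, ha, hab⟩)

section Repair

variable {A₁ A₂ : Type*}

open Classical in
def keepFst (R : Set (A₁ × A₂)) : Option A₁ × Option A₂ → Option A₁ × Option A₂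
  | (some a₁, some a₂) => if (a₁, a₂) ∈ R then (some a₁, some a₂) else (some a₁, none)
  | p => p

open Classical in
def keepSnd (R : Set (A₁ × A₂)) : Option A₁ × Option A₂ → Option A₁ × Option A₂
  | (some a₁, some a₂) => if (a₁, a₂) ∈ R then (some a₁, some a₂) else (none, some a₂)
  | p => p

def badSet (R : Set (A₁ × A₂)) : Set (Option A₁ × Option A₂) :=
  {p | ∃ a₁ a₂, p = (some a₁, some a₂) ∧ (a₁, a₂) ∉ R}

variable (R : Set (A₁ × A₂))

@[simp]
lemma keepFst_fst (p : Option A₁ × Option A₂) : (keepFst R p).1 = p.1 := by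
  rcases p with ⟨_ | a₁, _ | a₂⟩ <;> simp only [keepFst]
  split_ifs <;> rfl

@[simp]
lemma keepSnd_snd (p : Option A₁ × Option A₂) : (keepSnd R p).2 = p.2 := by
  rcases p with ⟨_ | a₁, _ | a₂⟩ <;> simp only [keepSnd]
  split_ifs <;> rfl

lemma keepFst_eq_keepSnd {p : Option A₁ × Option A₂} (hp : p ∉ badSet R) :
    keepFst R p = keepSnd R p := by
  rcases p with ⟨_ | a₁, _ | a₂⟩ <;> try rfl
  have hR : (a₁, a₂) ∈ R := by_contra fun h => hp ⟨a₁, a₂, rfl, h⟩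
  simp only [keepFst, keepSnd, if_pos hR]

lemma preimage_keepFst_subset (S : Set (Option A₁ × Option A₂)) :
    keepFst R ⁻¹' S ⊆ keepSnd R ⁻¹' S ∪ badSet R := fun p hp => by
  by_cases hb : p ∈ badSet R
  · exact Or.inr hb
  · exact Or.inl (by rwa [mem_preimage, ← keepFst_eq_keepSnd R hb])

lemma keepFst_mem_starRel {p : Option A₁ × Option A₂} (hp : p ≠ (none, none)) :
    keepFst R p ∈ starRel R := by
  rcases p with ⟨_ | a₁, _ | a₂⟩
  · exact absurd rfl hp
  all_goals simp only [keepFst]; try trivial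
  split_ifs with h
  exacts [h, trivial]

lemma keepSnd_mem_starRel {p : Option A₁ × Option A₂} (hp : p ≠ (none, none)) :
    keepSnd R p ∈ starRel R := by
  rcases p with ⟨_ | a₁, _ | a₂⟩
  · exact absurd rfl hp
  all_goals simp only [keepSnd]; try trivial
  split_ifs with h
  exacts [h, trivial]

end Repair

section Lifting

variable {A₁ A₂ : Type*} {ε δ : ℝ} {R : Set (A₁ × A₂)} {μ₁ : A₁ → ℝ≥0∞} {μ₂ : A₂ → ℝ≥0∞}
  {μL μR : Option A₁ × Option A₂ → ℝ≥0∞}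

structure IsLiftWitness (ε δ : ℝ) (R : Set (A₁ × A₂)) (μ₁ : A₁ → ℝ≥0∞) (μ₂ : A₂ → ℝ≥0∞)
    (μL μR : Option A₁ × Option A₂ → ℝ≥0∞) : Prop where
  subDist_left : IsSubDist μL
  subDist_right : IsSubDist μR
  marginal_left : ∀ a₁, ∑' o, μL (some a₁, o) = μ₁ a₁
  left_none : ∀ o, μL (none, o) = 0
  marginal_right : ∀ a₂, ∑' o, μR (o, some a₂) = μ₂ a₂
  right_none : ∀ o, μR (o, none) = 0
  support_left : {p | μL p ≠ 0} ⊆ starRel R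
  support_right : {p | μR p ≠ 0} ⊆ starRel R
  dist : ∀ S, setSum μL S ≤ ENNReal.ofReal (Real.exp ε) * setSum μR S + ENNReal.ofReal δ

lemma approxLift_iff_exists_isLiftWitness :
    ApproxLift ε δ R μ₁ μ₂ ↔ ∃ μL μR, IsLiftWitness ε δ R μ₁ μ₂ μL μR :=
  ⟨fun ⟨μL, μR, h₁, h₂, h₃, h₄, h₅, h₆, h₇, h₈, h₉⟩ =>
      ⟨μL, μR, h₁, h₂, h₃, h₄, h₅, h₆, h₇, h₈, h₉⟩,
    fun ⟨μL, μR, h₁, h₂, h₃, h₄, h₅, h₆, h₇, h₈, h₉⟩ =>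
      ⟨μL, μR, h₁, h₂, h₃, h₄, h₅, h₆, h₇, h₈, h₉⟩⟩

lemma IsLiftWitness.repair {R' : Set (A₁ × A₂)} {δ'' : ℝ}
    (w : IsLiftWitness ε δ R' μ₁ μ₂ μL μR)
    (hdist : ∀ S, setSum μL (keepFst R ⁻¹' S) ≤
      ENNReal.ofReal (Real.exp ε) * setSum μR (keepSnd R ⁻¹' S) + ENNReal.ofReal δ'') :
    ApproxLift ε δ'' R μ₁ μ₂ := by
  refine approxLift_iff_exists_isLiftWitness.2
    ⟨push (keepFst R) μL, push (keepSnd R) μR, ?_, ?_, ?_, ?_, ?_, ?_, ?_, ?_, ?_⟩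
  · exact (tsum_push _ _).trans_le w.subDist_left
  · exact (tsum_push _ _).trans_le w.subDist_right
  · exact fun a₁ => (tsum_push_fst (funext (keepFst_fst R)) μL _).trans (w.marginal_left a₁)
  · refine fun o => (push_eq_zero_iff _ _).2 fun q hq => ?_
    have hq₁ : q.1 = none := by rw [← keepFst_fst R q, hq]
    simpa [← hq₁] using w.left_none q.2
  · exact fun a₂ => (tsum_push_snd (funext (keepSnd_snd R)) μR _).trans (w.marginal_right a₂)
  · refine fun o => (push_eq_zero_iff _ _).2 fun q hq => ?_
    have hq₂ : q.2 = none := by rw [← keepSnd_snd R q, hq]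
    simpa [← hq₂] using w.right_none q.1
  · rintro _ hp
    obtain ⟨q, hq, rfl⟩ := support_push_subset _ _ hp
    exact keepFst_mem_starRel R fun h => hq (h ▸ w.left_none none)
  · rintro _ hp
    obtain ⟨q, hq, rfl⟩ := support_push_subset _ _ hp
    exact keepSnd_mem_starRel R fun h => hq (h ▸ w.right_none none)
  · intro S
    simpa only [setSum_push] using hdist S

end Lifting

section UpToBad

variable {A₁ A₂ : Type*} {R : Set (A₁ × A₂)}

lemma setSum_badSet_le_of_support_fst {P : Set A₁} {μ : Option A₁ × Option A₂ → ℝ≥0∞}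
    {ν : A₁ → ℝ≥0∞} (hsupp : {p | μ p ≠ 0} ⊆ starRel {p : A₁ × A₂ | p.1 ∈ P → p ∈ R})
    (hν : ∀ a, ∑' o, μ (some a, o) = ν a) :
    setSum μ (badSet R) ≤ setSum ν Pᶜ := calc
  setSum μ (badSet R) ≤ setSum μ (Prod.fst ⁻¹' (some '' Pᶜ)) := by
    refine setSum_mono_of_support μ fun p hp hμ => ?_
    obtain ⟨a₁, a₂, rfl, hR⟩ := hp
    exact ⟨a₁, fun ha => hR (hsupp hμ ha), rfl⟩
  _ = setSum (push Prod.fst μ ∘ some) Pᶜ := by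
    rw [← setSum_push, setSum_image _ (Option.some_injective _)]
  _ = setSum ν Pᶜ := by
    congr 1
    funext a
    rw [Function.comp_apply, push_fst, hν]

lemma setSum_badSet_le_of_support_snd {P : Set A₂} {μ : Option A₁ × Option A₂ → ℝ≥0∞}
    {ν : A₂ → ℝ≥0∞} (hsupp : {p | μ p ≠ 0} ⊆ starRel {p : A₁ × A₂ | p.2 ∈ P → p ∈ R})
    (hν : ∀ a, ∑' o, μ (o, some a) = ν a) :
    setSum μ (badSet R) ≤ setSum ν Pᶜ := calc
  setSum μ (badSet R) ≤ setSum μ (Prod.snd ⁻¹' (some '' Pᶜ)) := by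
    refine setSum_mono_of_support μ fun p hp hμ => ?_
    obtain ⟨a₁, a₂, rfl, hR⟩ := hp
    exact ⟨a₂, fun ha => hR (hsupp hμ ha), rfl⟩
  _ = setSum (push Prod.snd μ ∘ some) Pᶜ := by
    rw [← setSum_push, setSum_image _ (Option.some_injective _)]
  _ = setSum ν Pᶜ := by
    congr 1
    funext a
    rw [Function.comp_apply, push_snd, hν]

variable {ε δ δ' : ℝ} {μ₁ : A₁ → ℝ≥0∞} {μ₂ : A₂ → ℝ≥0∞}

theorem ApproxLift.of_upToBad_fst {P₁ : Set A₁} (hδ : 0 ≤ δ) (hδ' : 0 ≤ δ')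
    (hP : setSum μ₁ P₁ᶜ ≤ ENNReal.ofReal δ')
    (h : ApproxLift ε δ {p : A₁ × A₂ | p.1 ∈ P₁ → p ∈ R} μ₁ μ₂) :
    ApproxLift ε (δ + δ') R μ₁ μ₂ := by
  obtain ⟨μL, μR, w⟩ := approxLift_iff_exists_isLiftWitness.1 h
  have hbad : setSum μL (badSet R) ≤ ENNReal.ofReal δ' :=
    (setSum_badSet_le_of_support_fst w.support_left w.marginal_left).trans hP
  refine w.repair fun S => ?_
  calc setSum μL (keepFst R ⁻¹' S)
      ≤ setSum μL (keepSnd R ⁻¹' S) + setSum μL (badSet R) :=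
        setSum_le_setSum_union_setSum μL (preimage_keepFst_subset R S)
    _ ≤ ENNReal.ofReal (Real.exp ε) * setSum μR (keepSnd R ⁻¹' S) + ENNReal.ofReal δ
        + ENNReal.ofReal δ' := add_le_add (w.dist _) hbad
    _ = ENNReal.ofReal (Real.exp ε) * setSum μR (keepSnd R ⁻¹' S) + ENNReal.ofReal (δ + δ') := by
        rw [add_assoc, ENNReal.ofReal_add hδ hδ']

theorem ApproxLift.of_upToBad_snd {P₂ : Set A₂} (hδ : 0 ≤ δ) (hδ' : 0 ≤ δ')
    (hP : setSum μ₂ P₂ᶜ ≤ ENNReal.ofReal δ')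
    (h : ApproxLift ε δ {p : A₁ × A₂ | p.2 ∈ P₂ → p ∈ R} μ₁ μ₂) :
    ApproxLift ε (δ + Real.exp ε * δ') R μ₁ μ₂ := by
  obtain ⟨μL, μR, w⟩ := approxLift_iff_exists_isLiftWitness.1 h
  have hbad : setSum μR (badSet R) ≤ ENNReal.ofReal δ' :=
    (setSum_badSet_le_of_support_snd w.support_right w.marginal_right).trans hP
  refine w.repair fun S => ?_
  have hexp := Real.exp_nonneg ε
  calc setSum μL (keepFst R ⁻¹' S)
      ≤ ENNReal.ofReal (Real.exp ε) * setSum μR (keepFst R ⁻¹' S) + ENNReal.ofReal δ :=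
        w.dist _
    _ ≤ ENNReal.ofReal (Real.exp ε) * (setSum μR (keepSnd R ⁻¹' S) + ENNReal.ofReal δ')
        + ENNReal.ofReal δ := by
        gcongr
        exact (setSum_le_setSum_union_setSum μR (preimage_keepFst_subset R S)).trans
          (by gcongr)
    _ = ENNReal.ofReal (Real.exp ε) * setSum μR (keepSnd R ⁻¹' S)
        + ENNReal.ofReal (δ + Real.exp ε * δ') := by
        rw [ENNReal.ofReal_add hδ (mul_nonneg hexp hδ'), ENNReal.ofReal_mul hexp]
        ring

end UpToBad

theorem uptobad_coupling_general {A₁ A₂ : Type*}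
    (μ₁ : A₁ → ℝ≥0∞) (μ₂ : A₂ → ℝ≥0∞)
    (P₁ : Set A₁) (P₂ : Set A₂) (R : Set (A₁ × A₂)) (ε δ δ' : ℝ)
    (hδ : 0 ≤ δ) (hδ' : 0 ≤ δ') :
    (setSum μ₁ P₁ᶜ ≤ ENNReal.ofReal δ' →
      ApproxLift ε δ {p : A₁ × A₂ | p.1 ∈ P₁ → p ∈ R} μ₁ μ₂ →
      ApproxLift ε (δ + δ') R μ₁ μ₂) ∧
    (setSum μ₂ P₂ᶜ ≤ ENNReal.ofReal δ' →
      ApproxLift ε δ {p : A₁ × A₂ | p.2 ∈ P₂ → p ∈ R} μ₁ μ₂ →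
      ApproxLift ε (δ + Real.exp ε * δ') R μ₁ μ₂) :=
  ⟨fun hP h => h.of_upToBad_fst hδ hδ' hP, fun hP h => h.of_upToBad_snd hδ hδ' hP⟩

theorem uptobad_coupling {A₁ A₂ : Type*} [Countable A₁] [Countable A₂]
    (μ₁ : A₁ → ℝ≥0∞) (μ₂ : A₂ → ℝ≥0∞)
    (h₁ : IsSubDist μ₁) (h₂ : IsSubDist μ₂)
    (P₁ : Set A₁) (P₂ : Set A₂) (R : Set (A₁ × A₂)) (ε δ δ' : ℝ)
    (hδ : 0 ≤ δ) (hδ' : 0 ≤ δ') :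
    (setSum μ₁ P₁ᶜ ≤ ENNReal.ofReal δ' →
      ApproxLift ε δ {p : A₁ × A₂ | p.1 ∈ P₁ → p ∈ R} μ₁ μ₂ →
      ApproxLift ε (δ + δ') R μ₁ μ₂) ∧
    (setSum μ₂ P₂ᶜ ≤ ENNReal.ofReal δ' →
      ApproxLift ε δ {p : A₁ × A₂ | p.2 ∈ P₂ → p ∈ R} μ₁ μ₂ →
      ApproxLift ε (δ + Real.exp ε * δ') R μ₁ μ₂) :=
  uptobad_coupling_general μ₁ μ₂ P₁ P₂ R ε δ δ' hδ hδ'
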